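/- arXiv:2101.09547 — 2 statements merged into one kernel-verified Lean document; each statement's English description precedes it below -/
import Mathlib

section
/- Let α > 2, ℓ ∈ [0,1], r > 0. Let W ≥ 0 with E[W^{2/α}] < ∞, Θ a random angle in [0,π/2] independent of W, and L a {1,ℓ}-valued random variable with P[L = 1 | Θ] = ρ(Θ) for a measurable function ρ: [0,π/2] → [0,1], with L conditionally independent of W given Θ. Then 2∫₀^∞ P[ W L (x sec Θ)^{-α} ≥ r ] x dx = E[cos²(Θ)(ρ(Θ)(1 - ℓ^{2/α}) + ℓ^{2/α})] · E[W^{2/α}] · r^{-2/α}. -/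
/-!
For `x > 0` the event `W L (x sec Θ)^(-α) ≥ r` is `x ≤ T` with `T = cos Θ · (W L / r)^(1/α)`, so by
the layer-cake formula the left side is `E[T²] = r^(-2/α) E[W^(2/α) · cos²Θ · L^(2/α)]`. Independence
of `W` and `(L, Θ)` splits off `E[W^(2/α)]`. Since `L` is two-valued,
`L^(2/α) = ℓ^(2/α) + (1 - ℓ^(2/α)) 1_{L = 1}`, whose conditional expectation given `Θ` is
`ρ(Θ)(1 - ℓ^(2/α)) + ℓ^(2/α)`; the factor `cos²Θ` is `Θ`-measurable and pulls out.
-/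

open MeasureTheory ProbabilityTheory Real Set

theorem Integrable.integral_rpow_eq_integral_meas_le_mul {α : Type*} [MeasurableSpace α]
    {μ : Measure α} {f : α → ℝ} {p : ℝ} (hp : 0 < p)
    (f_nn : 0 ≤ᵐ[μ] f) (f_mble : AEMeasurable f μ) (hfp : Integrable (fun a => f a ^ p) μ) :
    ∫ a, f a ^ p ∂μ = p * ∫ t in Ioi 0, μ.real {a | t ≤ f a} * t ^ (p - 1) := by
  have hfin : ∀ t ∈ Ioi (0 : ℝ), μ {a | t ≤ f a} ≠ ⊤ := fun t ht =>
    ((measure_mono fun a ha => rpow_le_rpow (le_of_lt ht) ha hp.le).trans_lt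
      (hfp.measure_ge_lt_top (rpow_pos_of_pos ht p))).ne
  have hmeas : Measurable fun t => μ {a | t ≤ f a} :=
    Antitone.measurable fun s t hst => measure_mono fun a ha => hst.trans ha
  rw [integral_eq_lintegral_of_nonneg_ae (f_nn.mono fun a ha => rpow_nonneg ha p)
      hfp.aestronglyMeasurable, lintegral_rpow_eq_lintegral_meas_le_mul μ f_nn f_mble hp,
    ENNReal.toReal_mul, ENNReal.toReal_ofReal hp.le, integral_eq_lintegral_of_nonneg_ae]
  · congr 2
    refine setLIntegral_congr_fun measurableSet_Ioi fun t ht => ?_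
    rw [ENNReal.ofReal_mul measureReal_nonneg, measureReal_def, ENNReal.ofReal_toReal (hfin t ht)]
  · filter_upwards [ae_restrict_mem measurableSet_Ioi] with t ht
    exact mul_nonneg measureReal_nonneg (rpow_nonneg (le_of_lt ht) _)
  · exact (hmeas.ennreal_toReal.mul (measurable_id.pow_const _)).aestronglyMeasurable

lemma le_mul_div_rpow_neg_iff {r y c x α : ℝ} (hr : 0 < r) (hy : 0 ≤ y) (hc : 0 ≤ c)
    (hx : 0 < x) (hα : 0 < α) : r ≤ y * (x / c) ^ (-α) ↔ x ≤ c * (y / r) ^ α⁻¹ := by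
  rcases hc.eq_or_lt with rfl | hc
  · simp only [div_zero, zero_rpow (neg_ne_zero.mpr hα.ne'), mul_zero, zero_mul]
    exact iff_of_false hr.not_ge hx.not_ge
  have hxc : 0 < x / c := div_pos hx hc
  rw [rpow_neg hxc.le, ← div_eq_mul_inv, le_div_iff₀ (rpow_pos_of_pos hxc α), mul_comm c,
    ← div_le_iff₀ hc, le_rpow_inv_iff_of_pos hxc.le (div_nonneg hy hr.le) hα, le_div_iff₀ hr,
    mul_comm r]

lemma mul_div_rpow_inv_rpow_two {c y r α : ℝ} (hc : 0 ≤ c) (hy : 0 ≤ y) (hr : 0 < r) :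
    (c * (y / r) ^ α⁻¹) ^ (2 : ℝ) = r ^ (-(2 / α)) * (y ^ (2 / α) * c ^ 2) := by
  have hyr : 0 ≤ y / r := div_nonneg hy hr.le
  rw [mul_rpow hc (rpow_nonneg hyr _), ← rpow_mul hyr, div_rpow hy hr.le, rpow_two,
    rpow_neg hr.le, inv_mul_eq_div]
  ring

theorem two_mul_integral_meas_le_mul_rpow_neg {Ω : Type*} [MeasurableSpace Ω] {μ : Measure Ω}
    {Y c : Ω → ℝ} {r α : ℝ} (hr : 0 < r) (hα : 0 < α) (hY : ∀ ω, 0 ≤ Y ω) (hc : ∀ ω, 0 ≤ c ω)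
    (hYm : AEMeasurable Y μ) (hcm : AEMeasurable c μ)
    (hint : Integrable (fun ω => (c ω * (Y ω / r) ^ α⁻¹) ^ (2 : ℝ)) μ) :
    2 * ∫ x in Ioi 0, (μ {ω | r ≤ Y ω * (x / c ω) ^ (-α)}).toReal * x
      = ∫ ω, (c ω * (Y ω / r) ^ α⁻¹) ^ (2 : ℝ) ∂μ := by
  rw [Integrable.integral_rpow_eq_integral_meas_le_mul two_pos
    (ae_of_all _ fun ω => mul_nonneg (hc ω) (rpow_nonneg (div_nonneg (hY ω) hr.le) _))
    (by fun_prop) hint]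
  refine congrArg _ (setIntegral_congr_fun measurableSet_Ioi fun x hx => ?_)
  have hset : {ω | r ≤ Y ω * (x / c ω) ^ (-α)} = {ω | x ≤ c ω * (Y ω / r) ^ α⁻¹} :=
    Set.ext fun ω => le_mul_div_rpow_neg_iff hr (hY ω) (hc ω) hx hα
  rw [hset, measureReal_def]
  norm_num

section TwoValued

variable {Ω β : Type*} {m m₀ : MeasurableSpace Ω} {μ : Measure Ω} {X : Ω → β} {a b : β}

lemma comp_eq_add_smul_indicator (hX : ∀ ω, X ω = a ∨ X ω = b) (φ : β → ℝ) :
    (fun ω => φ (X ω))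
      = (fun _ => φ b) + (φ a - φ b) • {ω | X ω = a}.indicator (fun _ => (1 : ℝ)) := by
  funext ω
  by_cases ha : X ω = a
  · simp [ha]
  · simp [(hX ω).resolve_left ha, Set.indicator_of_notMem (show ω ∉ {ω | X ω = a} from ha)]

lemma integral_mul_condExp_of_stronglyMeasurable (hm : m ≤ m₀) [SigmaFinite (μ.trim hm)]
    {f g : Ω → ℝ} (hf : StronglyMeasurable[m] f) (hfg : Integrable (f * g) μ)
    (hg : Integrable g μ) : ∫ ω, f ω * (μ[g | m]) ω ∂μ = ∫ ω, f ω * g ω ∂μ :=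
  calc ∫ ω, f ω * (μ[g | m]) ω ∂μ = ∫ ω, (μ[f * g | m]) ω ∂μ :=
        integral_congr_ae (condExp_mul_of_stronglyMeasurable_left hf hfg hg).symm
    _ = ∫ ω, f ω * g ω ∂μ := integral_condExp hm

theorem integral_mul_comp_eq_of_condExp_indicator [IsFiniteMeasure μ] {γ : Type*}
    [MeasurableSpace γ] [MeasurableSpace β] [MeasurableSingletonClass β] {Θ : Ω → γ}
    (hΘ : Measurable Θ) (hXm : Measurable X) (hX : ∀ ω, X ω = a ∨ X ω = b) {ρ : γ → ℝ}
    (hcond : μ[{ω | X ω = a}.indicator (fun _ => (1 : ℝ)) | MeasurableSpace.comap Θ ‹_›]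
      =ᵐ[μ] fun ω => ρ (Θ ω))
    {h : γ → ℝ} (hh : Measurable h) {C : ℝ} (hC : ∀ θ, |h θ| ≤ C) (φ : β → ℝ) :
    ∫ ω, h (Θ ω) * φ (X ω) ∂μ = ∫ ω, h (Θ ω) * (ρ (Θ ω) * (φ a - φ b) + φ b) ∂μ := by
  set mΘ := MeasurableSpace.comap Θ ‹MeasurableSpace γ›
  have hm : mΘ ≤ m₀ := hΘ.comap_le
  have hind : Integrable ({ω | X ω = a}.indicator fun _ => (1 : ℝ)) μ :=
    (integrable_const 1).indicator (hXm (measurableSet_singleton a))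
  have hφX : Integrable (fun ω => φ (X ω)) μ := by
    rw [comp_eq_add_smul_indicator hX φ]
    exact (integrable_const _).add (hind.smul _)
  have hhΘ : StronglyMeasurable[mΘ] fun ω => h (Θ ω) :=
    (hh.comp (Measurable.of_comap_le le_rfl)).stronglyMeasurable
  have hprod : Integrable (fun ω => h (Θ ω) * φ (X ω)) μ :=
    hφX.bdd_mul (hhΘ.mono hm).aestronglyMeasurable (ae_of_all _ fun ω => (hC (Θ ω)))
  have hcondφ : μ[fun ω => φ (X ω) | mΘ] =ᵐ[μ] fun ω => ρ (Θ ω) * (φ a - φ b) + φ b := by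
    rw [comp_eq_add_smul_indicator hX φ]
    filter_upwards [condExp_add (integrable_const (φ b)) (hind.smul (φ a - φ b)) mΘ,
      condExp_smul (φ a - φ b) ({ω | X ω = a}.indicator fun _ => (1 : ℝ)) mΘ, hcond]
      with ω hadd hsmul hρ
    rw [hadd, Pi.add_apply, condExp_const hm, hsmul, Pi.smul_apply, hρ, smul_eq_mul]
    ring
  calc ∫ ω, h (Θ ω) * φ (X ω) ∂μ = ∫ ω, h (Θ ω) * (μ[fun ω => φ (X ω) | mΘ]) ω ∂μ :=
        (integral_mul_condExp_of_stronglyMeasurable hm hhΘ hprod hφX).symm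
    _ = _ := integral_congr_ae (hcondφ.mono fun ω hω => by simp only [hω])

end TwoValued

theorem weighted_tail_integral_general {Ω : Type*} [MeasurableSpace Ω]
    (μ : Measure Ω) [IsProbabilityMeasure μ]
    (α ℓ r : ℝ) (hα : 2 < α) (hℓ : ℓ ∈ Set.Icc (0 : ℝ) 1) (hr : 0 < r)
    (W L Θ : Ω → ℝ)
    (hWmeas : Measurable W) (hLmeas : Measurable L) (hΘmeas : Measurable Θ)
    (hWnonneg : ∀ ω, 0 ≤ W ω)
    (hWmom : Integrable (fun ω => W ω ^ (2 / α)) μ)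
    (hΘrange : ∀ ω, Θ ω ∈ Set.Icc 0 (π / 2))
    (hLval : ∀ ω, L ω = 1 ∨ L ω = ℓ)
    (ρ : ℝ → ℝ)
    (hcond : μ[Set.indicator {ω | L ω = 1} (fun _ => (1 : ℝ)) |
        MeasurableSpace.comap Θ Real.measurableSpace] =ᵐ[μ] fun ω => ρ (Θ ω))
    (hindep : IndepFun W (fun ω => (L ω, Θ ω)) μ) :
    2 * ∫ x in Set.Ioi (0 : ℝ),
        (μ {ω | r ≤ W ω * L ω * (x / Real.cos (Θ ω)) ^ (-α)}).toReal * x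
      = (∫ ω, Real.cos (Θ ω) ^ 2 * (ρ (Θ ω) * (1 - ℓ ^ (2 / α)) + ℓ ^ (2 / α)) ∂μ)
          * (∫ ω, W ω ^ (2 / α) ∂μ) * r ^ (-(2 / α)) := by
  have hL : ∀ ω, L ω ∈ Icc 0 1 := fun ω =>
    (hLval ω).elim (fun h => by simp [h]) (fun h => h ▸ hℓ)
  have hWL : ∀ ω, 0 ≤ W ω * L ω := fun ω => mul_nonneg (hWnonneg ω) (hL ω).1
  have hcos : ∀ ω, 0 ≤ cos (Θ ω) := fun ω =>
    cos_nonneg_of_mem_Icc ⟨by linarith [(hΘrange ω).1, pi_pos], (hΘrange ω).2⟩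
  have hsq : ∀ ω, (cos (Θ ω) * (W ω * L ω / r) ^ α⁻¹) ^ (2 : ℝ)
      = r ^ (-(2 / α)) * (W ω ^ (2 / α) * (cos (Θ ω) ^ 2 * L ω ^ (2 / α))) := fun ω => by
    rw [mul_div_rpow_inv_rpow_two (hcos ω) (hWL ω) hr, mul_rpow (hWnonneg ω) (hL ω).1]
    ring
  have hindep' : IndepFun (fun ω => W ω ^ (2 / α)) (fun ω => cos (Θ ω) ^ 2 * L ω ^ (2 / α)) μ :=
    hindep.comp (φ := fun w => w ^ (2 / α)) (ψ := fun p : ℝ × ℝ => cos p.2 ^ 2 * p.1 ^ (2 / α))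
      (by fun_prop) (by fun_prop)
  have hg_int : Integrable (fun ω => cos (Θ ω) ^ 2 * L ω ^ (2 / α)) μ := by
    refine .of_bound (by fun_prop) 1 (ae_of_all _ fun ω => ?_)
    have hLβ := rpow_le_one (hL ω).1 (hL ω).2 (by positivity : 0 ≤ 2 / α)
    rw [norm_mul, norm_of_nonneg (sq_nonneg _), norm_of_nonneg (rpow_nonneg (hL ω).1 _)]
    exact mul_le_one₀ (cos_sq_le_one _) (rpow_nonneg (hL ω).1 _) hLβ
  have hcond_int := integral_mul_comp_eq_of_condExp_indicator hΘmeas hLmeas hLval hcond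
    (h := fun θ => cos θ ^ 2) (by fun_prop) (C := 1)
    (fun θ => (abs_of_nonneg (sq_nonneg _)).trans_le (cos_sq_le_one θ)) (fun l => l ^ (2 / α))
  rw [one_rpow] at hcond_int
  refine (two_mul_integral_meas_le_mul_rpow_neg (Y := fun ω => W ω * L ω)
    (c := fun ω => cos (Θ ω)) hr (by linarith) hWL hcos (by fun_prop) (by fun_prop)
    (by simp_rw [hsq]; exact (hindep'.integrable_mul hWmom hg_int).const_mul _)).trans ?_
  simp_rw [hsq]
  rw [integral_const_mul, hindep'.integral_fun_mul_eq_mul_integral hWmom.aestronglyMeasurable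
    hg_int.aestronglyMeasurable, hcond_int]
  ring

/-- `2∫₀^∞ P[W L (x sec Θ)^{-α} ≥ r] x dx
= E[cos²Θ (ρ(Θ)(1 - ℓ^{2/α}) + ℓ^{2/α})] · E[W^{2/α}] · r^{-2/α}`. -/
theorem weighted_tail_integral {Ω : Type*} [MeasurableSpace Ω]
    (μ : Measure Ω) [IsProbabilityMeasure μ]
    (α ℓ r : ℝ) (hα : 2 < α) (hℓ : ℓ ∈ Set.Icc (0 : ℝ) 1) (hr : 0 < r)
    (W L Θ : Ω → ℝ)
    (hWmeas : Measurable W) (hLmeas : Measurable L) (hΘmeas : Measurable Θ)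
    (hWnonneg : ∀ ω, 0 ≤ W ω)
    (hWmom : Integrable (fun ω => W ω ^ (2 / α)) μ)
    (hΘrange : ∀ ω, Θ ω ∈ Set.Icc 0 (π / 2))
    (hLval : ∀ ω, L ω = 1 ∨ L ω = ℓ)
    (ρ : ℝ → ℝ) (hρmeas : Measurable ρ) (hρrange : ∀ θ, ρ θ ∈ Set.Icc (0 : ℝ) 1)
    (hcond : μ[Set.indicator {ω | L ω = 1} (fun _ => (1 : ℝ)) |
        MeasurableSpace.comap Θ Real.measurableSpace] =ᵐ[μ] fun ω => ρ (Θ ω))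
    (hindep : IndepFun W (fun ω => (L ω, Θ ω)) μ) :
    2 * ∫ x in Set.Ioi (0 : ℝ),
        (μ {ω | r ≤ W ω * L ω * (x / Real.cos (Θ ω)) ^ (-α)}).toReal * x
      = (∫ ω, Real.cos (Θ ω) ^ 2 * (ρ (Θ ω) * (1 - ℓ ^ (2 / α)) + ℓ ^ (2 / α)) ∂μ)
          * (∫ ω, W ω ^ (2 / α) ∂μ) * r ^ (-(2 / α)) :=
  weighted_tail_integral_general μ α ℓ r hα hℓ hr W L Θ hWmeas hLmeas hΘmeas hWnonneg hWmom hΘrange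
    hLval ρ hcond hindep
end

section
/- For 0 < v < 1 and u > 0, the function I_G(u,v) := u^v ( πv / sin(πv) − ∫₀^{u^{−v}} dr/(1 + r^{1/v}) ) is nonnegative and strictly increasing in u. -/
open MeasureTheory Real Set

/-- The function `I_G(u,v) = u^v (πv/sin(πv) − ∫₀^{u^{−v}} dr/(1 + r^{1/v}))`. -/
noncomputable def IG (u v : ℝ) : ℝ :=
  u ^ v * (π * v / Real.sin (π * v)
    - ∫ r in Set.Ioc (0 : ℝ) (u ^ (-v)), 1 / (1 + r ^ (1 / v)))

/-! Splitting `∫₀^∞ = ∫₀^{u^{-v}} + ∫_{u^{-v}}^∞` and rescaling `r = u^{-v} s` turn `I_G(u,v)` into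
`∫₁^∞ ds / (1 + (u^{-v} s)^{1/v})`, whose integrand is positive and strictly increasing in `u`.
That `∫₀^∞ dr / (1 + r^{1/v}) = πv / sin(πv)` follows from the substitutions `r = x^v` and
`x = t / (1 - t)`, which turn it into `v B(v, 1 - v) = v Γ(v) Γ(1 - v)`. -/

theorem integral_Ioo_rpow_mul_one_sub_rpow {a b : ℝ} (ha : 0 < a) (hb : 0 < b) :
    ∫ t in Ioo (0 : ℝ) 1, t ^ (a - 1) * (1 - t) ^ (b - 1) = Gamma a * Gamma b / Gamma (a + b) := by
  have hB := Complex.betaIntegral_eq_Gamma_mul_div a b (by simpa) (by simpa)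
  have hreal : Complex.betaIntegral a b =
      ((∫ t in (0 : ℝ)..1, t ^ (a - 1) * (1 - t) ^ (b - 1) : ℝ) : ℂ) := by
    rw [Complex.betaIntegral, ← intervalIntegral.integral_ofReal]
    refine intervalIntegral.integral_congr fun t ht => ?_
    rw [uIcc_of_le zero_le_one] at ht
    push_cast [Complex.ofReal_cpow ht.1, Complex.ofReal_cpow (sub_nonneg.2 ht.2)]
    rfl
  rw [hreal, ← Complex.ofReal_add, Complex.Gamma_ofReal, Complex.Gamma_ofReal,
    Complex.Gamma_ofReal, ← Complex.ofReal_mul, ← Complex.ofReal_div] at hB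
  rw [← integral_Ioc_eq_integral_Ioo, ← intervalIntegral.integral_of_le zero_le_one,
    Complex.ofReal_injective hB]

theorem integral_Ioi_rpow_mul_one_add_rpow (a b : ℝ) :
    ∫ x in Ioi (0 : ℝ), x ^ (a - 1) * (1 + x) ^ (-(a + b)) =
      ∫ t in Ioo (0 : ℝ) 1, t ^ (a - 1) * (1 - t) ^ (b - 1) := by
  have himage : (fun x : ℝ => x / (1 + x)) '' Ioi 0 = Ioo 0 1 := by
    ext t
    constructor
    · rintro ⟨x, hx, rfl⟩
      have hx : 0 < x := hx
      exact ⟨by positivity, (div_lt_one (by positivity)).2 (by linarith)⟩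
    · rintro ⟨ht0, ht1⟩
      refine ⟨t / (1 - t), div_pos ht0 (sub_pos.2 ht1), ?_⟩
      field_simp
      ring
  have hderiv : ∀ x ∈ Ioi (0 : ℝ),
      HasDerivWithinAt (fun x : ℝ => x / (1 + x)) ((1 + x) ^ (-2 : ℝ)) (Ioi 0) x := by
    intro x hx
    have hx : 0 < 1 + x := by linarith [mem_Ioi.1 hx]
    refine (((hasDerivAt_id x).div ((hasDerivAt_const x 1).add (hasDerivAt_id x))
      hx.ne').congr_deriv ?_).hasDerivWithinAt
    rw [rpow_neg hx.le, rpow_two]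
    simp
  have hinj : InjOn (fun x : ℝ => x / (1 + x)) (Ioi 0) := by
    intro x hx y hy hxy
    have hx : 0 < 1 + x := by linarith [mem_Ioi.1 hx]
    have hy : 0 < 1 + y := by linarith [mem_Ioi.1 hy]
    rw [div_eq_div_iff hx.ne' hy.ne'] at hxy
    linarith
  rw [← himage, integral_image_eq_integral_abs_deriv_smul measurableSet_Ioi hderiv hinj]
  refine setIntegral_congr_fun measurableSet_Ioi fun x hx => ?_
  have hx0 : 0 < x := hx
  have hx1 : 0 < 1 + x := by linarith
  have hsub : 1 - x / (1 + x) = (1 + x)⁻¹ := by field_simp; ring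
  rw [hsub, div_rpow hx0.le hx1.le, inv_rpow hx1.le, abs_of_pos (rpow_pos_of_pos hx1 _),
    smul_eq_mul, div_eq_mul_inv, ← rpow_neg hx1.le, ← rpow_neg hx1.le]
  calc x ^ (a - 1) * (1 + x) ^ (-(a + b))
      = x ^ (a - 1) * ((1 + x) ^ (-2 : ℝ) * (1 + x) ^ (-(a - 1)) * (1 + x) ^ (-(b - 1))) := by
        rw [← rpow_add hx1, ← rpow_add hx1]
        ring_nf
    _ = (1 + x) ^ (-2 : ℝ) * (x ^ (a - 1) * (1 + x) ^ (-(a - 1)) * (1 + x) ^ (-(b - 1))) := by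
        ring

theorem integral_Ioi_rpow_div_one_add {s : ℝ} (hs0 : 0 < s) (hs1 : s < 1) :
    ∫ x in Ioi (0 : ℝ), x ^ (s - 1) / (1 + x) = π / sin (π * s) := by
  have h := integral_Ioi_rpow_mul_one_add_rpow s (1 - s)
  rw [integral_Ioo_rpow_mul_one_sub_rpow hs0 (sub_pos.2 hs1), add_sub_cancel, Gamma_one,
    div_one, Gamma_mul_Gamma_one_sub] at h
  rw [← h]
  refine setIntegral_congr_fun measurableSet_Ioi fun x _ => ?_
  rw [rpow_neg_one, div_eq_mul_inv]

theorem integral_Ioi_one_div_one_add_rpow_inv {v : ℝ} (hv0 : 0 < v) (hv1 : v < 1) :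
    ∫ r in Ioi (0 : ℝ), 1 / (1 + r ^ (1 / v)) = π * v / sin (π * v) := by
  rw [← integral_comp_rpow_Ioi _ hv0.ne']
  have hsubst : ∀ x ∈ Ioi (0 : ℝ),
      (|v| * x ^ (v - 1)) • (1 / (1 + (x ^ v) ^ (1 / v))) = v * (x ^ (v - 1) / (1 + x)) := by
    intro x hx
    rw [← rpow_mul (le_of_lt hx), mul_one_div_cancel hv0.ne', rpow_one, abs_of_pos hv0,
      smul_eq_mul]
    ring
  rw [setIntegral_congr_fun measurableSet_Ioi hsubst, integral_const_mul,
    integral_Ioi_rpow_div_one_add hv0 hv1, mul_div_assoc', mul_comm v π]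

theorem integrableOn_Ioi_one_div_one_add_rpow {p : ℝ} (hp : 1 < p) :
    IntegrableOn (fun r : ℝ => 1 / (1 + r ^ p)) (Ioi 0) := by
  have hcont : ContinuousOn (fun r : ℝ => 1 / (1 + r ^ p)) (Ici 0) :=
    continuousOn_const.div (continuousOn_const.add
      (continuousOn_id.rpow_const fun _ _ => Or.inr (by linarith)))
      fun r (hr : 0 ≤ r) => by positivity
  rw [← Ioc_union_Ioi_eq_Ioi zero_le_one]
  refine IntegrableOn.union (((hcont.mono Icc_subset_Ici_self).integrableOn_compact
    isCompact_Icc).mono_set Ioc_subset_Icc_self) ?_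
  have hdom : IntegrableOn (fun r : ℝ => r ^ (-p)) (Ioi 1) :=
    integrableOn_Ioi_rpow_of_lt (neg_lt_neg hp) zero_lt_one
  refine hdom.mono' ((hcont.mono fun r (hr : 1 < r) => (zero_lt_one.trans hr).le
    ).aestronglyMeasurable measurableSet_Ioi) ?_
  filter_upwards [ae_restrict_mem measurableSet_Ioi] with r hr
  have hr : 0 < r := zero_lt_one.trans hr
  rw [norm_of_nonneg (by positivity), rpow_neg hr.le, one_div]
  exact inv_anti₀ (by positivity) (by linarith)

theorem one_div_one_add_rpow_strictAntiOn {p : ℝ} (hp : 0 < p) :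
    StrictAntiOn (fun r : ℝ => 1 / (1 + r ^ p)) (Ici 0) := by
  intro r (hr : 0 ≤ r) t (ht : 0 ≤ t) hrt
  have hrp : r ^ p < t ^ p := rpow_lt_rpow hr hrt hp
  exact one_div_lt_one_div_of_lt (by positivity) (by linarith)

theorem setIntegral_pos_of_forall_pos {X : Type*} [MeasurableSpace X] {μ : Measure X}
    {f : X → ℝ} {s : Set X} (hs : MeasurableSet s) (hμs : μ s ≠ 0) (hf : IntegrableOn f s μ)
    (hpos : ∀ x ∈ s, 0 < f x) : 0 < ∫ x in s, f x ∂μ := by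
  rw [setIntegral_pos_iff_support_of_nonneg_ae (ae_restrict_of_forall_mem hs fun x hx =>
    (hpos x hx).le) hf, inter_eq_self_of_subset_right
      (show s ⊆ Function.support f from fun x hx => (hpos x hx).ne')]
  exact pos_iff_ne_zero.2 hμs

theorem IG_eq_integral_Ioi_one {u v : ℝ} (hu : 0 < u) (hv : v ∈ Ioo (0 : ℝ) 1) :
    IG u v = ∫ s in Ioi (1 : ℝ), 1 / (1 + (u ^ (-v) * s) ^ (1 / v)) := by
  set f : ℝ → ℝ := fun r => 1 / (1 + r ^ (1 / v))
  have ha : 0 < u ^ (-v) := rpow_pos_of_pos hu _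
  have hf : IntegrableOn f (Ioi 0) :=
    integrableOn_Ioi_one_div_one_add_rpow (one_lt_one_div hv.1 hv.2)
  have htail :
      π * v / sin (π * v) - ∫ r in Ioc 0 (u ^ (-v)), f r = ∫ r in Ioi (u ^ (-v)), f r := by
    rw [← integral_Ioi_one_div_one_add_rpow_inv hv.1 hv.2, ← Ioc_union_Ioi_eq_Ioi ha.le,
      setIntegral_union (Ioc_disjoint_Ioi le_rfl) measurableSet_Ioi
        (hf.mono_set Ioc_subset_Ioi_self) (hf.mono_set (Ioi_subset_Ioi ha.le))]
    ring
  rw [IG, htail, ← mul_one (u ^ (-v)), ← integral_comp_mul_left_Ioi' f 1 ha, smul_eq_mul,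
    ← mul_assoc, ← rpow_add hu, add_neg_cancel, rpow_zero, one_mul, mul_one]

/-- For `0 < v < 1`, `I_G(·, v)` is nonnegative and strictly increasing on `(0,∞)`. -/
theorem IG_nonneg_strictMono (v : ℝ) (hv : v ∈ Set.Ioo (0 : ℝ) 1) :
    (∀ u > (0 : ℝ), 0 ≤ IG u v) ∧ StrictMonoOn (fun u => IG u v) (Set.Ioi 0) := by
  set g : ℝ → ℝ := fun r => 1 / (1 + r ^ (1 / v))
  have hg_int : IntegrableOn g (Ioi 0) :=
    integrableOn_Ioi_one_div_one_add_rpow (one_lt_one_div hv.1 hv.2)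
  have hF_int : ∀ u > (0 : ℝ), IntegrableOn (fun s => g (u ^ (-v) * s)) (Ioi 1) := fun u hu =>
    (integrableOn_Ioi_comp_mul_left_iff g 1 (rpow_pos_of_pos hu _)).2
      (hg_int.mono_set (Ioi_subset_Ioi (by positivity)))
  refine ⟨fun u hu => ?_, fun u₁ (hu₁ : 0 < u₁) u₂ (hu₂ : 0 < u₂) hu => ?_⟩
  · rw [IG_eq_integral_Ioi_one hu hv]
    exact setIntegral_nonneg measurableSet_Ioi fun s (hs : 1 < s) => by positivity
  · have hpow : u₂ ^ (-v) < u₁ ^ (-v) := rpow_lt_rpow_of_neg hu₁ hu (neg_lt_zero.2 hv.1)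
    show IG u₁ v < IG u₂ v
    rw [IG_eq_integral_Ioi_one hu₁ hv, IG_eq_integral_Ioi_one hu₂ hv, ← sub_pos,
      ← integral_sub (hF_int u₂ hu₂) (hF_int u₁ hu₁)]
    refine setIntegral_pos_of_forall_pos measurableSet_Ioi (by simp)
      ((hF_int u₂ hu₂).sub (hF_int u₁ hu₁)) fun s (hs : 1 < s) => sub_pos.2 ?_
    have hs0 : 0 < s := zero_lt_one.trans hs
    exact one_div_one_add_rpow_strictAntiOn (one_div_pos.2 hv.1)
      (mem_Ici.2 (by positivity)) (mem_Ici.2 (by positivity))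
      (mul_lt_mul_of_pos_right hpow hs0)
end
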